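/- arXiv:2009.10717 — 2 statements merged into one kernel-verified Lean document; each statement's English description precedes it below -/
import Mathlib

section
/- For any minibatch-SAGA state, E_B[φ2⁺] − φ2 ≤ −(1 − e^{−m/n})·φ2 + 4·m·η²·L·⟨y, ∇f(x)⟩, where φ2⁺ denotes the value of φ2 at the state produced by one step with batch B. -/
open Finset
open scoped RealInnerProductSpace BigOperators

noncomputable section

/-- The state of minibatch SAGA: the iterate `x` and the last gradients `α_i`. -/
structure MbState (d n : ℕ) where
  x : EuclideanSpace ℝ (Fin d)
  alpha : Fin n → EuclideanSpace ℝ (Fin d)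

namespace MbState

variable {d n : ℕ}

/-- `ᾱ = (1/n) ∑ i, α_i`. -/
def abar (S : MbState d n) : EuclideanSpace ℝ (Fin d) :=
  ((1 : ℝ) / n) • ∑ i, S.alpha i

/-- One step of minibatch SAGA with batch `B = (i_1, …, i_m)` (one index per machine). -/
def step {m : ℕ} (gradf : Fin n → EuclideanSpace ℝ (Fin d) → EuclideanSpace ℝ (Fin d))
    (η : ℝ) (S : MbState d n) (B : Fin m → Fin n) : MbState d n where
  x := S.x - η • ((∑ j, gradf (B j) S.x) - (∑ j, S.alpha (B j)) + (m : ℝ) • S.abar)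
  alpha := fun i => if ∃ j, B j = i then gradf i S.x else S.alpha i

/-- Run `k` steps of minibatch SAGA, with batches given by `ω`. -/
def run {m : ℕ} (gradf : Fin n → EuclideanSpace ℝ (Fin d) → EuclideanSpace ℝ (Fin d))
    (η : ℝ) (S0 : MbState d n) : (k : ℕ) → (Fin k → (Fin m → Fin n)) → MbState d n
  | 0, _ => S0
  | (k + 1), ω => step gradf η (run gradf η S0 k (fun t => ω t.castSucc)) (ω (Fin.last k))

end MbState

/-- The probability of a batch `B`, when each `i_j` is drawn independently and uniformly from
`S_j = J⁻¹(j)` (each of size `n/m`): it is `(m/n)^m` if `B j ∈ S_j` for all `j`, and `0`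
otherwise. -/
def mbWeight {n m : ℕ} (J : Fin n → Fin m) (B : Fin m → Fin n) : ℝ :=
  ∏ j, if J (B j) = j then (m : ℝ) / n else 0

end

/-!
Each index `i` lies in exactly one block `S_{J i}`, so it is refreshed with probability `m/n` and
`E_B[φ2⁺] = (1 - m/n) φ2 + (m/n) · 4η² ∑ i, ‖∇f_i(x) - ∇f_i(x*)‖²`. Co-coercivity of the convex
`L`-smooth `f_i`, summed with `∑ i, ∇f_i(x*) = 0`, bounds the last sum by `n L ⟪y, ∇f(x)⟫`, and
`1 - e^{-m/n} ≤ m/n` absorbs the remaining `-(m/n) φ2`.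
-/

section SmoothConvex

variable {E : Type*} [NormedAddCommGroup E] [InnerProductSpace ℝ E] [CompleteSpace E]
  {f : E → ℝ} {g : E → E} {L : ℝ}

theorem HasGradientAt.hasDerivAt_comp_add_smul {f' a v : E} {t : ℝ}
    (hf : HasGradientAt f f' (a + t • v)) :
    HasDerivAt (fun s : ℝ => f (a + s • v)) ⟪f', v⟫ t := by
  have hline : HasDerivAt (fun s : ℝ => a + s • v) v t := by
    simpa using ((hasDerivAt_id t).smul_const v).const_add a
  have h := hf.hasFDerivAt.comp_hasDerivAt t hline
  simp only [InnerProductSpace.toDual_apply_apply] at h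
  exact h

theorem ConvexOn.add_inner_le_of_hasGradientAt (hc : ConvexOn ℝ Set.univ f) {f' x : E}
    (hf : HasGradientAt f f' x) (y : E) :
    f x + ⟪f', y - x⟫ ≤ f y := by
  have hline : ConvexOn ℝ Set.univ (fun t : ℝ => f (x + t • (y - x))) := by
    have hcomp : (fun t : ℝ => f (x + t • (y - x))) = f ∘ AffineMap.lineMap x y := by
      funext t
      simp only [Function.comp_apply, AffineMap.lineMap_apply_module]
      congr 1
      module
    simpa [hcomp] using hc.comp_affineMap (AffineMap.lineMap x y)
  have hderiv : HasDerivAt (fun t : ℝ => f (x + t • (y - x))) ⟪f', y - x⟫ 0 :=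
    HasGradientAt.hasDerivAt_comp_add_smul (by simpa using hf)
  have := hline.le_slope_of_hasDerivAt (Set.mem_univ 0) (Set.mem_univ 1) one_pos hderiv
  simp only [slope_def_field, zero_smul, add_zero, one_smul, add_sub_cancel, sub_zero,
    div_one] at this
  linarith

/-- The descent lemma. -/
theorem le_add_inner_add_of_lipschitz_gradient (hg : ∀ z, HasGradientAt f (g z) z)
    (hlip : ∀ x y, ‖g x - g y‖ ≤ L * ‖x - y‖) (x y : E) :
    f y ≤ f x + ⟪g x, y - x⟫ + L / 2 * ‖y - x‖ ^ 2 := by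
  set v := y - x
  -- `ψ` is antitone on `[0, 1]` since `⟪g (x + t • v) - g x, v⟫ ≤ L * t * ‖v‖ ^ 2`.
  set ψ : ℝ → ℝ := fun t => f (x + t • v) - t * ⟪g x, v⟫ - L * t ^ 2 / 2 * ‖v‖ ^ 2 with hψ
  have hderiv (t : ℝ) :
      HasDerivAt ψ (⟪g (x + t • v), v⟫ - ⟪g x, v⟫ - L * t * ‖v‖ ^ 2) t := by
    have hf : HasDerivAt (fun s : ℝ => f (x + s • v)) ⟪g (x + t • v), v⟫ t :=
      (hg _).hasDerivAt_comp_add_smul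
    have hlin := (hasDerivAt_id t).mul_const ⟪g x, v⟫
    have hsq := ((hasDerivAt_pow 2 t).const_mul L).div_const 2 |>.mul_const (‖v‖ ^ 2)
    refine ((hf.sub hlin).sub hsq).congr_deriv ?_
    simp only [Nat.cast_ofNat]
    ring
  have hanti : AntitoneOn ψ (Set.Icc 0 1) := by
    refine antitoneOn_of_deriv_nonpos (convex_Icc 0 1)
      (fun t _ => (hderiv t).continuousAt.continuousWithinAt)
      (fun t _ => (hderiv t).differentiableAt.differentiableWithinAt) fun t ht => ?_
    rw [interior_Icc] at ht
    have hinner : ⟪g (x + t • v) - g x, v⟫ ≤ L * t * ‖v‖ ^ 2 :=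
      calc ⟪g (x + t • v) - g x, v⟫ ≤ ‖g (x + t • v) - g x‖ * ‖v‖ := real_inner_le_norm _ _
        _ ≤ L * ‖t • v‖ * ‖v‖ := by
          gcongr
          simpa using hlip (x + t • v) x
        _ = L * t * ‖v‖ ^ 2 := by rw [norm_smul, Real.norm_of_nonneg ht.1.le]; ring
    rw [(hderiv t).deriv]
    rw [inner_sub_left] at hinner
    linarith
  have := hanti (Set.left_mem_Icc.mpr zero_le_one) (Set.right_mem_Icc.mpr zero_le_one)
    zero_le_one
  norm_num [hψ, v] at this
  linarith

theorem ConvexOn.add_inner_add_norm_sq_le (hc : ConvexOn ℝ Set.univ f)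
    (hg : ∀ z, HasGradientAt f (g z) z) (hL : 0 < L)
    (hlip : ∀ x y, ‖g x - g y‖ ≤ L * ‖x - y‖) (x y : E) :
    f x + ⟪g x, y - x⟫ + 1 / (2 * L) * ‖g y - g x‖ ^ 2 ≤ f y := by
  -- `f - ⟪g x, ·⟫` is minimal at `x`: compare with its value after a gradient step from `y`.
  set w := g y - g x
  set z := y - (1 / L) • w
  have hlow : f x + ⟪g x, z - x⟫ ≤ f z := hc.add_inner_le_of_hasGradientAt (hg x) z
  have hup : f z ≤ f y + ⟪g y, z - y⟫ + L / 2 * ‖z - y‖ ^ 2 :=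
    le_add_inner_add_of_lipschitz_gradient hg hlip y z
  have hzx : ⟪g x, z - x⟫ = ⟪g x, y - x⟫ - 1 / L * ⟪g x, w⟫ := by
    rw [show z - x = (y - x) - (1 / L) • w by simp only [z]; abel, inner_sub_right,
      real_inner_smul_right]
  have hzy : z - y = -((1 / L) • w) := by simp only [z]; abel
  have hw : ⟪g y, w⟫ - ⟪g x, w⟫ = ‖w‖ ^ 2 := by
    rw [← inner_sub_left, real_inner_self_eq_norm_sq]
  rw [hzy, inner_neg_right, real_inner_smul_right, norm_neg, norm_smul, Real.norm_eq_abs,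
    abs_of_pos (one_div_pos.mpr hL)] at hup
  rw [hzx] at hlow
  have hquad : L / 2 * (1 / L * ‖w‖) ^ 2 = 1 / (2 * L) * ‖w‖ ^ 2 := by field_simp
  have hlin : 1 / L * ⟪g y, w⟫ - 1 / L * ⟪g x, w⟫ = 2 * (1 / (2 * L) * ‖w‖ ^ 2) := by
    rw [← mul_sub, hw]; field_simp
  linarith

/-- Co-coercivity of the gradient of a convex `L`-smooth function. -/
theorem ConvexOn.norm_sub_sq_le_inner (hc : ConvexOn ℝ Set.univ f)
    (hg : ∀ z, HasGradientAt f (g z) z) (hL : 0 < L)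
    (hlip : ∀ x y, ‖g x - g y‖ ≤ L * ‖x - y‖) (x y : E) :
    ‖g x - g y‖ ^ 2 ≤ L * ⟪g x - g y, x - y⟫ := by
  have hxy := hc.add_inner_add_norm_sq_le hg hL hlip x y
  have hyx := hc.add_inner_add_norm_sq_le hg hL hlip y x
  rw [norm_sub_rev] at hxy
  have hsum : 1 / L * ‖g x - g y‖ ^ 2 ≤ ⟪g x - g y, x - y⟫ := by
    have hinner : ⟪g x - g y, x - y⟫ = -⟪g x, y - x⟫ - ⟪g y, x - y⟫ := by
      rw [inner_sub_left, ← neg_sub x y, inner_neg_right, neg_neg]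
    have hhalf : 1 / L * ‖g x - g y‖ ^ 2 = 2 * (1 / (2 * L) * ‖g x - g y‖ ^ 2) := by field_simp
    linarith
  calc ‖g x - g y‖ ^ 2 = L * (1 / L * ‖g x - g y‖ ^ 2) := by field_simp
    _ ≤ L * ⟪g x - g y, x - y⟫ := by gcongr

theorem sum_norm_sub_sq_le_inner_sum {ι : Type*} [Fintype ι] {f : ι → E → ℝ}
    {g : ι → E → E} (hc : ∀ i, ConvexOn ℝ Set.univ (f i))
    (hg : ∀ i z, HasGradientAt (f i) (g i z) z) (hL : 0 < L)
    (hlip : ∀ i x y, ‖g i x - g i y‖ ≤ L * ‖x - y‖) {xstar : E}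
    (hstar : ∑ i, g i xstar = 0) (x : E) :
    ∑ i, ‖g i x - g i xstar‖ ^ 2 ≤ L * ⟪x - xstar, ∑ i, g i x⟫ :=
  calc ∑ i, ‖g i x - g i xstar‖ ^ 2 ≤ ∑ i, L * ⟪g i x - g i xstar, x - xstar⟫ :=
        sum_le_sum fun i _ => (hc i).norm_sub_sq_le_inner (hg i) hL (hlip i) x xstar
    _ = L * ⟪x - xstar, ∑ i, g i x⟫ := by
        rw [← mul_sum, ← sum_inner, sum_sub_distrib, hstar, sub_zero, real_inner_comm]

end SmoothConvex

theorem sum_prod_mul_apply_eq_sum {ι α R : Type*} [Fintype ι] [DecidableEq ι] [Fintype α]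
    [CommSemiring R] (w : ι → α → R) (hw : ∀ j, ∑ b, w j b = 1) (j₀ : ι) (h : α → R) :
    ∑ B : ι → α, (∏ j, w j (B j)) * h (B j₀) = ∑ b, w j₀ b * h b := by
  have hfactor (B : ι → α) :
      (∏ j, w j (B j)) * h (B j₀) = ∏ j, w j (B j) * if j = j₀ then h (B j) else 1 := by
    rw [prod_mul_distrib, prod_ite_eq' univ j₀, if_pos (mem_univ _)]
  simp_rw [hfactor]
  rw [← Fintype.prod_sum fun j b => w j b * if j = j₀ then h b else 1,
    Fintype.prod_eq_single j₀ fun j hj => by simp [hj, hw]]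
  simp

namespace MbState

variable {d n m : ℕ}

/-- The law of the index `i_j` drawn on machine `j`: uniform on `S_j = J⁻¹(j)`. -/
noncomputable def fiberWeight (J : Fin n → Fin m) (j : Fin m) (b : Fin n) : ℝ :=
  if J b = j then (m : ℝ) / n else 0

theorem mbWeight_eq_prod_fiberWeight (J : Fin n → Fin m) (B : Fin m → Fin n) :
    mbWeight J B = ∏ j, fiberWeight J j (B j) :=
  rfl

theorem sum_fiberWeight (hn : 0 < n) (hmn : m ∣ n) {J : Fin n → Fin m}
    (hpart : ∀ j, (univ.filter (fun i => J i = j)).card = n / m) (j : Fin m) :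
    ∑ b, fiberWeight J j b = 1 := by
  have hm : (m : ℝ) ≠ 0 := by exact_mod_cast (Nat.pos_of_dvd_of_pos hmn hn).ne'
  have hn' : (n : ℝ) ≠ 0 := by exact_mod_cast hn.ne'
  simp only [fiberWeight]
  rw [← sum_filter, sum_const, nsmul_eq_mul, hpart, Nat.cast_div hmn hm]
  field_simp

theorem step_alpha_of_mbWeight_ne_zero {J : Fin n → Fin m} {B : Fin m → Fin n}
    (hB : mbWeight J B ≠ 0) (gradf : Fin n → EuclideanSpace ℝ (Fin d) → EuclideanSpace ℝ (Fin d))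
    (η : ℝ) (S : MbState d n) (i : Fin n) :
    (step gradf η S B).alpha i = if B (J i) = i then gradf i S.x else S.alpha i := by
  have hJ (j : Fin m) : J (B j) = j := by
    by_contra hj
    exact hB (prod_eq_zero (mem_univ j) (if_neg hj))
  have hchosen : (∃ j, B j = i) ↔ B (J i) = i :=
    ⟨fun ⟨j, hj⟩ => by rw [← hj, hJ], fun h => ⟨J i, h⟩⟩
  simp only [step, hchosen]

variable (hn : 0 < n) (hmn : m ∣ n) {J : Fin n → Fin m}
  (hpart : ∀ j, (univ.filter (fun i => J i = j)).card = n / m)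
  (gradf : Fin n → EuclideanSpace ℝ (Fin d) → EuclideanSpace ℝ (Fin d)) (η : ℝ) (S : MbState d n)
include hn hmn hpart

theorem sum_mbWeight_mul_step_alpha (i : Fin n) (F : EuclideanSpace ℝ (Fin d) → ℝ) :
    ∑ B, mbWeight J B * F ((step gradf η S B).alpha i)
      = F (S.alpha i) + (m : ℝ) / n * (F (gradf i S.x) - F (S.alpha i)) := by
  have hcoord (B : Fin m → Fin n) : mbWeight J B * F ((step gradf η S B).alpha i)
      = (∏ j, fiberWeight J j (B j)) * F (if B (J i) = i then gradf i S.x else S.alpha i) := by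
    by_cases hB : mbWeight J B = 0
    · rw [hB, ← mbWeight_eq_prod_fiberWeight, hB, zero_mul, zero_mul]
    · rw [step_alpha_of_mbWeight_ne_zero hB, mbWeight_eq_prod_fiberWeight]
  have hsplit (b : Fin n) : fiberWeight J (J i) b * F (if b = i then gradf i S.x else S.alpha i)
      = fiberWeight J (J i) b * F (S.alpha i)
        + if b = i then fiberWeight J (J i) b * (F (gradf i S.x) - F (S.alpha i)) else 0 := by
    split_ifs <;> ring
  simp_rw [hcoord]
  rw [sum_prod_mul_apply_eq_sum _ (sum_fiberWeight hn hmn hpart) (J i)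
    (fun b => F (if b = i then gradf i S.x else S.alpha i))]
  simp_rw [hsplit]
  rw [sum_add_distrib, ← sum_mul, sum_fiberWeight hn hmn hpart, one_mul, sum_ite_eq' univ i,
    if_pos (mem_univ i)]
  simp [fiberWeight]

theorem sum_mbWeight_mul_sum_norm_sq_step_alpha (c : Fin n → EuclideanSpace ℝ (Fin d)) :
    ∑ B, mbWeight J B * ∑ i, ‖(step gradf η S B).alpha i - c i‖ ^ 2
      = ∑ i, ‖S.alpha i - c i‖ ^ 2
        + (m : ℝ) / n * (∑ i, ‖gradf i S.x - c i‖ ^ 2 - ∑ i, ‖S.alpha i - c i‖ ^ 2) := by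
  simp_rw [mul_sum]
  rw [sum_comm]
  simp_rw [fun i => sum_mbWeight_mul_step_alpha hn hmn hpart gradf η S i (‖· - c i‖ ^ 2)]
  rw [sum_add_distrib, ← mul_sum, sum_sub_distrib]

end MbState

theorem minibatch_phi2_decrease_general
    {d n m : ℕ} (hn : 0 < n) (hmn : m ∣ n)
    (L : ℝ) (hL : 0 < L)
    (f : Fin n → EuclideanSpace ℝ (Fin d) → ℝ)
    (gradf : Fin n → EuclideanSpace ℝ (Fin d) → EuclideanSpace ℝ (Fin d))
    (hgrad : ∀ i x, HasGradientAt (f i) (gradf i x) x)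
    (hconv : ∀ i, ConvexOn ℝ Set.univ (f i))
    (hsmooth : ∀ i (x y : EuclideanSpace ℝ (Fin d)), ‖gradf i x - gradf i y‖ ≤ L * ‖x - y‖)
    (xstar : EuclideanSpace ℝ (Fin d))
    (hstarzero : (∑ i, gradf i xstar) = 0)
    (J : Fin n → Fin m)
    (hpart : ∀ j, (Finset.univ.filter (fun i => J i = j)).card = n / m)
    (η : ℝ)
    (S : MbState d n)
    :
    (∑ B : Fin m → Fin n, mbWeight J B *
        (4 * η ^ 2 * ∑ i, ‖(MbState.step gradf η S B).alpha i - gradf i xstar‖ ^ 2))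
        - 4 * η ^ 2 * (∑ i, ‖S.alpha i - gradf i xstar‖ ^ 2)
      ≤ -(1 - Real.exp (-((m : ℝ) / n))) *
            (4 * η ^ 2 * ∑ i, ‖S.alpha i - gradf i xstar‖ ^ 2)
        + 4 * (m : ℝ) * η ^ 2 * L *
            ⟪S.x - xstar, ((1 : ℝ) / n) • ∑ i, gradf i S.x⟫ := by
  set p : ℝ := (m : ℝ) / n
  set C := ∑ i, ‖S.alpha i - gradf i xstar‖ ^ 2
  have hexpect : ∑ B, mbWeight J B *
        (4 * η ^ 2 * ∑ i, ‖(MbState.step gradf η S B).alpha i - gradf i xstar‖ ^ 2)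
      = 4 * η ^ 2 * (C + p * (∑ i, ‖gradf i S.x - gradf i xstar‖ ^ 2 - C)) := by
    simp_rw [mul_left_comm _ (4 * η ^ 2)]
    rw [← mul_sum, MbState.sum_mbWeight_mul_sum_norm_sq_step_alpha hn hmn hpart]
  have hcoco := sum_norm_sub_sq_le_inner_sum hconv hgrad hL hsmooth hstarzero S.x
  have hexp : 1 - Real.exp (-p) ≤ p := by linarith [Real.add_one_le_exp (-p)]
  rw [hexpect, real_inner_smul_right]
  have hscale : 4 * (m : ℝ) * η ^ 2 * L * (1 / n * ⟪S.x - xstar, ∑ i, gradf i S.x⟫)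
      = 4 * η ^ 2 * p * (L * ⟪S.x - xstar, ∑ i, gradf i S.x⟫) := by ring
  rw [hscale]
  linarith [mul_le_mul_of_nonneg_left hcoco (by positivity : 0 ≤ 4 * η ^ 2 * p),
    mul_le_mul_of_nonneg_left hexp (by positivity : 0 ≤ 4 * η ^ 2 * C)]

theorem minibatch_phi2_decrease
    {d n m : ℕ} (hd : 0 < d) (hn : 0 < n) (hm : 0 < m) (hmn : m ∣ n)
    (L Lf μ : ℝ) (hL : 0 < L) (hLf : 0 < Lf) (hμ : 0 < μ)
    (f : Fin n → EuclideanSpace ℝ (Fin d) → ℝ)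
    (gradf : Fin n → EuclideanSpace ℝ (Fin d) → EuclideanSpace ℝ (Fin d))
    (hgrad : ∀ i x, HasGradientAt (f i) (gradf i x) x)
    (hconv : ∀ i, ConvexOn ℝ Set.univ (f i))
    (hsmooth : ∀ i (x y : EuclideanSpace ℝ (Fin d)), ‖gradf i x - gradf i y‖ ≤ L * ‖x - y‖)
    (hFsmooth : ∀ x y : EuclideanSpace ℝ (Fin d),
      ‖((1 : ℝ) / n) • (∑ i, gradf i x) - ((1 : ℝ) / n) • (∑ i, gradf i y)‖ ≤ Lf * ‖x - y‖)
    (hFstrong : ∀ x y : EuclideanSpace ℝ (Fin d),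
      μ * ‖x - y‖ ^ 2 ≤
        ⟪((1 : ℝ) / n) • (∑ i, gradf i x) - ((1 : ℝ) / n) • (∑ i, gradf i y), x - y⟫)
    (xstar : EuclideanSpace ℝ (Fin d))
    (hmin : ∀ x : EuclideanSpace ℝ (Fin d),
      (((1 : ℝ) / n) * ∑ i, f i xstar) ≤ ((1 : ℝ) / n) * ∑ i, f i x)
    (hstarzero : (∑ i, gradf i xstar) = 0)
    (J : Fin n → Fin m)
    (hpart : ∀ j, (Finset.univ.filter (fun i => J i = j)).card = n / m)
    (η : ℝ) (hη : 0 < η)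
    (S : MbState d n)
    :
    (∑ B : Fin m → Fin n, mbWeight J B *
        (4 * η ^ 2 * ∑ i, ‖(MbState.step gradf η S B).alpha i - gradf i xstar‖ ^ 2))
        - 4 * η ^ 2 * (∑ i, ‖S.alpha i - gradf i xstar‖ ^ 2)
      ≤ -(1 - Real.exp (-((m : ℝ) / n))) *
            (4 * η ^ 2 * ∑ i, ‖S.alpha i - gradf i xstar‖ ^ 2)
        + 4 * (m : ℝ) * η ^ 2 * L *
            ⟪S.x - xstar, ((1 : ℝ) / n) • ∑ i, gradf i S.x⟫ :=
  minibatch_phi2_decrease_general hn hmn L hL f gradf hgrad hconv hsmooth xstar hstarzero J hpart η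
    S
end

section
/- Set η = 1/(2·m·L_f + 6·L). Then for any minibatch-SAGA state, E_B[φ⁺] ≤ (1 − γ)·φ, where γ = min( μ·m/(4·m·L_f + 12·L), m/(3n) ) and φ⁺ denotes the value of φ at the state produced by one step with batch B. -/
open Finset
open scoped RealInnerProductSpace BigOperators

/-! The step is `x⁺ = x - η v_B` with `v_B = Σ_j (∇f_{i_j}(x) - α_{i_j}) + m ᾱ`, an unbiased
estimate of `m ∇f(x)`. The indices `i_j` are independent, so the variance of `v_B` is the sum of
the per-machine variances, each bounded by a second moment; this gives
`E‖x⁺ - x*‖² ≤ ‖x - x* - η m ∇f(x)‖² + η² (m/n) Σ_i ‖∇f_i(x) - α_i‖²`, while each `α_i` is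
refreshed with probability `m/n`. The rest is deterministic: co-coercivity in Bregman form,
`‖∇g(x) - ∇g(x*)‖² ≤ 2K (g(x) - g(x*) - ⟪∇g(x*), x - x*⟫)`, for the `f_i` and for `f`, and
strong convexity `f(x) - f(x*) + μ/2 ‖x - x*‖² ≤ ⟪∇f(x), x - x*⟫`. With `η = 1/(2 m L_f + 6 L)`
the function-gap terms have a nonpositive total coefficient and the rest contracts by `1 - γ`. -/

open AffineMap (lineMap lineMap_apply_one lineMap_apply_zero hasDerivAt_lineMap right_vsub_lineMap)

section Analysis

variable {E : Type*} [NormedAddCommGroup E] [InnerProductSpace ℝ E] [CompleteSpace E]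

lemma HasGradientAt.hasDerivAt_comp_lineMap {f : E → ℝ} {g x y : E} {t : ℝ}
    (h : HasGradientAt f g (lineMap x y t)) :
    HasDerivAt (fun s : ℝ => f (lineMap x y s)) ⟪g, y - x⟫ t := by
  simpa [InnerProductSpace.toDual_apply_apply, Function.comp_def] using
    (hasGradientAt_iff_hasFDerivAt.1 h).comp_hasDerivAt t hasDerivAt_lineMap

lemma sub_le_of_hasDerivAt_le_affine {φ φ' : ℝ → ℝ} {a b : ℝ}
    (hφ : ∀ t, HasDerivAt φ (φ' t) t) (hle : ∀ t ∈ Set.Ico (0 : ℝ) 1, φ' t ≤ a + b * t) :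
    φ 1 - φ 0 ≤ a + b / 2 := by
  have hB : ∀ t, HasDerivAt (fun s => φ 0 + a * s + b / 2 * s ^ 2) (a + b * t) t := by
    intro t
    refine ((((hasDerivAt_id' t).const_mul a).const_add (φ 0)).fun_add
      ((hasDerivAt_pow 2 t).const_mul (b / 2))).congr_deriv ?_
    norm_num
    ring
  have := image_le_of_deriv_right_le_deriv_boundary
    (fun t _ => (hφ t).continuousAt.continuousWithinAt) (fun t _ => (hφ t).hasDerivWithinAt)
    (B := fun s => φ 0 + a * s + b / 2 * s ^ 2) (by simp)
    (fun t _ => (hB t).continuousAt.continuousWithinAt) (fun t _ => (hB t).hasDerivWithinAt)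
    hle (b := 1) (Set.right_mem_Icc.2 zero_le_one)
  linarith

lemma le_add_inner_add_sq_of_lipschitz_gradient {f : E → ℝ} {G : E → E} {K : ℝ}
    (hf : ∀ z, HasGradientAt f (G z) z) (hG : ∀ a b, ‖G a - G b‖ ≤ K * ‖a - b‖) (x y : E) :
    f y ≤ f x + ⟪G x, y - x⟫ + K / 2 * ‖y - x‖ ^ 2 := by
  have key := sub_le_of_hasDerivAt_le_affine (fun t => (hf _).hasDerivAt_comp_lineMap)
    (a := ⟪G x, y - x⟫) (b := K * ‖y - x‖ ^ 2) fun t ht => by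
      have hdist : ‖lineMap x y t - x‖ = t * ‖y - x‖ := by
        rw [← dist_eq_norm, dist_lineMap_left, Real.norm_of_nonneg ht.1, dist_eq_norm']
      calc ⟪G (lineMap x y t), y - x⟫
          = ⟪G x, y - x⟫ + ⟪G (lineMap x y t) - G x, y - x⟫ := by rw [inner_sub_left]; ring
        _ ≤ ⟪G x, y - x⟫ + K * (t * ‖y - x‖) * ‖y - x‖ := by
          gcongr
          exact (real_inner_le_norm _ _).trans
            (mul_le_mul_of_nonneg_right (hdist ▸ hG _ _) (norm_nonneg _))
        _ = ⟪G x, y - x⟫ + K * ‖y - x‖ ^ 2 * t := by ring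
  simp only [lineMap_apply_one, lineMap_apply_zero] at key
  linarith

lemma ConvexOn.add_inner_gradient_le {f : E → ℝ} {G : E → E} (hconv : ConvexOn ℝ Set.univ f)
    (hf : ∀ z, HasGradientAt f (G z) z) (x y : E) :
    f x + ⟪G x, y - x⟫ ≤ f y := by
  have hline : ConvexOn ℝ Set.univ (fun s : ℝ => f (lineMap x y s)) := by
    simpa [Function.comp_def] using hconv.comp_affineMap (lineMap x y)
  have := hline.le_slope_of_hasDerivAt (Set.mem_univ 0) (Set.mem_univ 1) zero_lt_one
    (hf _).hasDerivAt_comp_lineMap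
  simp only [slope_def_field, lineMap_apply_one, lineMap_apply_zero] at this
  linarith

lemma ConvexOn.norm_sub_gradient_sq_le {f : E → ℝ} {G : E → E} {K : ℝ}
    (hconv : ConvexOn ℝ Set.univ f) (hf : ∀ z, HasGradientAt f (G z) z) (hK : 0 < K)
    (hG : ∀ a b, ‖G a - G b‖ ≤ K * ‖a - b‖) (x y : E) :
    ‖G x - G y‖ ^ 2 ≤ 2 * K * (f x - f y - ⟪G y, x - y⟫) := by
  set d := G x - G y
  -- compare the descent bound and the convexity bound at the gradient step from `x`
  set z := x - K⁻¹ • d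
  have hdesc := le_add_inner_add_sq_of_lipschitz_gradient hf hG x z
  have hcvx := hconv.add_inner_gradient_le hf y z
  have hzx : z - x = -(K⁻¹ • d) := by simp [z]
  have hzy : z - y = (x - y) - K⁻¹ • d := by simp only [z]; abel
  rw [hzx, norm_neg, norm_smul, mul_pow, Real.norm_of_nonneg (inv_nonneg.2 hK.le),
    inner_neg_right, real_inner_smul_right] at hdesc
  rw [hzy, inner_sub_right, real_inner_smul_right] at hcvx
  have hd : K⁻¹ * ⟪G x, d⟫ - K⁻¹ * ⟪G y, d⟫ = K⁻¹ * ‖d‖ ^ 2 := by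
    rw [← mul_sub, ← inner_sub_left, real_inner_self_eq_norm_sq]
  have hK2 : K / 2 * (K⁻¹ ^ 2 * ‖d‖ ^ 2) = K⁻¹ * ‖d‖ ^ 2 / 2 := by field_simp
  calc ‖d‖ ^ 2 = 2 * K * (K⁻¹ * ‖d‖ ^ 2 / 2) := by field_simp
    _ ≤ 2 * K * (f x - f y - ⟪G y, x - y⟫) := by gcongr; linarith

lemma sub_add_sq_le_inner_of_strongly_monotone_gradient {f : E → ℝ} {G : E → E} {μ : ℝ}
    (hf : ∀ z, HasGradientAt f (G z) z) (hG : ∀ a b, μ * ‖a - b‖ ^ 2 ≤ ⟪G a - G b, a - b⟫)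
    (x y : E) :
    f x - f y + μ / 2 * ‖x - y‖ ^ 2 ≤ ⟪G x, x - y⟫ := by
  have key := sub_le_of_hasDerivAt_le_affine (fun t => (hf _).hasDerivAt_comp_lineMap)
    (a := ⟪G x, x - y⟫ - μ * ‖x - y‖ ^ 2) (b := μ * ‖x - y‖ ^ 2) fun t ht => by
      have hpos : 0 < 1 - t := sub_pos.2 ht.2
      have hsub : x - lineMap y x t = (1 - t) • (x - y) := by
        simpa using right_vsub_lineMap y x t
      have hmono := hG x (lineMap y x t)
      rw [hsub, norm_smul, mul_pow, Real.norm_of_nonneg hpos.le, real_inner_smul_right,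
        inner_sub_left] at hmono
      nlinarith
  simp only [lineMap_apply_one, lineMap_apply_zero] at key
  linarith

end Analysis

section Sums

variable {E : Type*} [NormedAddCommGroup E] [InnerProductSpace ℝ E]

lemma sum_mul_norm_sub_sum_smul_sq {α : Type*} [Fintype α] {w : α → ℝ} (hw : ∑ a, w a = 1)
    (u : α → E) :
    ∑ a, w a * ‖u a - ∑ b, w b • u b‖ ^ 2 = ∑ a, w a * ‖u a‖ ^ 2 - ‖∑ b, w b • u b‖ ^ 2 := by
  set ubar := ∑ b, w b • u b
  have hcross : ∑ a, w a * ⟪u a, ubar⟫ = ‖ubar‖ ^ 2 := by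
    rw [← real_inner_self_eq_norm_sq]
    simp only [ubar, sum_inner, real_inner_smul_left]
  calc ∑ a, w a * ‖u a - ubar‖ ^ 2
      = ∑ a, (w a * ‖u a‖ ^ 2 - 2 * (w a * ⟪u a, ubar⟫) + w a * ‖ubar‖ ^ 2) := by
        refine Finset.sum_congr rfl fun a _ => ?_
        rw [norm_sub_sq_real]
        ring
    _ = ∑ a, w a * ‖u a‖ ^ 2 - ‖ubar‖ ^ 2 := by
        rw [Finset.sum_add_distrib, Finset.sum_sub_distrib, ← Finset.mul_sum, ← Finset.sum_mul,
          hcross, hw]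
        ring

lemma sum_norm_sub_sq_le {ι : Type*} [Fintype ι] (a b c : ι → E) :
    ∑ i, ‖a i - b i‖ ^ 2 ≤ 2 * ∑ i, ‖a i - c i‖ ^ 2 + 2 * ∑ i, ‖b i - c i‖ ^ 2 := by
  rw [Finset.mul_sum, Finset.mul_sum, ← Finset.sum_add_distrib]
  refine Finset.sum_le_sum fun i _ => ?_
  have := parallelogram_law_with_norm ℝ (a i - c i) (b i - c i)
  rw [sub_sub_sub_cancel_right] at this
  nlinarith [mul_self_nonneg ‖a i - c i + (b i - c i)‖]

lemma ConvexOn.fun_sum {ι : Type*} {s : Finset ι} {t : Set E} (ht : Convex ℝ t)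
    {f : ι → E → ℝ} (hf : ∀ i ∈ s, ConvexOn ℝ t (f i)) :
    ConvexOn ℝ t (fun x => ∑ i ∈ s, f i x) := by
  classical
  induction s using Finset.induction_on with
  | empty => simpa using convexOn_const (0 : ℝ) ht
  | insert a s ha ih =>
    simp only [Finset.sum_insert ha]
    exact (hf a (Finset.mem_insert_self a s)).add
      (ih fun i hi => hf i (Finset.mem_insert_of_mem hi))

variable [CompleteSpace E]

lemma HasGradientAt.fun_sum {ι : Type*} {s : Finset ι} {f : ι → E → ℝ} {g : ι → E} {x : E}
    (h : ∀ i ∈ s, HasGradientAt (f i) (g i) x) :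
    HasGradientAt (fun y => ∑ i ∈ s, f i y) (∑ i ∈ s, g i) x := by
  rw [hasGradientAt_iff_hasFDerivAt, map_sum]
  exact HasFDerivAt.fun_sum fun i hi => hasGradientAt_iff_hasFDerivAt.1 (h i hi)

lemma HasGradientAt.const_mul {f : E → ℝ} {g x : E} (h : HasGradientAt f g x) (c : ℝ) :
    HasGradientAt (fun y => c * f y) (c • g) x := by
  rw [hasGradientAt_iff_hasFDerivAt, map_smul]
  exact (hasGradientAt_iff_hasFDerivAt.1 h).const_mul c

lemma sum_norm_gradient_sub_sq_le {ι : Type*} [Fintype ι] {f : ι → E → ℝ} {G : ι → E → E}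
    {K : ℝ} (hconv : ∀ i, ConvexOn ℝ Set.univ (f i)) (hf : ∀ i z, HasGradientAt (f i) (G i z) z)
    (hK : 0 < K) (hG : ∀ i a b, ‖G i a - G i b‖ ≤ K * ‖a - b‖) {xstar : E}
    (hstar : ∑ i, G i xstar = 0) (x : E) :
    ∑ i, ‖G i x - G i xstar‖ ^ 2 ≤ 2 * K * (∑ i, f i x - ∑ i, f i xstar) := by
  calc ∑ i, ‖G i x - G i xstar‖ ^ 2
      ≤ ∑ i, 2 * K * (f i x - f i xstar - ⟪G i xstar, x - xstar⟫) :=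
        Finset.sum_le_sum fun i _ =>
          (hconv i).norm_sub_gradient_sq_le (hf i) hK (hG i) x xstar
    _ = 2 * K * (∑ i, f i x - ∑ i, f i xstar - ⟪∑ i, G i xstar, x - xstar⟫) := by
        rw [sum_inner, ← Finset.mul_sum, Finset.sum_sub_distrib, Finset.sum_sub_distrib]
    _ = 2 * K * (∑ i, f i x - ∑ i, f i xstar) := by
        rw [hstar, inner_zero_left, sub_zero]

end Sums

section ProductWeights

variable {ι α : Type*} [Fintype ι] [DecidableEq ι] [Fintype α]

lemma sum_prod_mul_prod (w t : ι → α → ℝ) :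
    ∑ B : ι → α, (∏ i, w i (B i)) * ∏ i, t i (B i) = ∏ i, ∑ a, w i a * t i a := by
  simp_rw [← Finset.prod_mul_distrib]
  exact (Fintype.prod_sum fun i a => w i a * t i a).symm

variable {w : ι → α → ℝ}

lemma sum_prod_weight (hw : ∀ i, ∑ a, w i a = 1) : ∑ B : ι → α, ∏ i, w i (B i) = 1 := by
  simpa [hw] using (Fintype.prod_sum w).symm

lemma sum_prod_weight_mul_apply (hw : ∀ i, ∑ a, w i a = 1) (j : ι) (t : α → ℝ) :
    ∑ B : ι → α, (∏ i, w i (B i)) * t (B j) = ∑ a, w j a * t a := by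
  have := sum_prod_mul_prod w (fun i a => if i = j then t a else 1)
  simp only [Finset.prod_ite_eq', Finset.mem_univ, if_true] at this
  rw [this, Fintype.prod_eq_single j fun i hi => by simp [hi, hw]]
  simp

lemma sum_prod_weight_mul_mul_apply (hw : ∀ i, ∑ a, w i a = 1) {j k : ι} (hjk : j ≠ k)
    (s r : α → ℝ) :
    ∑ B : ι → α, (∏ i, w i (B i)) * (s (B j) * r (B k))
      = (∑ a, w j a * s a) * ∑ b, w k b * r b := by
  have := sum_prod_mul_prod w
    (fun i a => (if i = j then s a else 1) * (if i = k then r a else 1))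
  simp only [Finset.prod_mul_distrib, Finset.prod_ite_eq', Finset.mem_univ, if_true] at this
  rw [this, Finset.prod_eq_mul j k hjk (fun i _ hi => by simp [hi.1, hi.2, hw])
    (by simp) (by simp)]
  simp [hjk, hjk.symm]

lemma sum_prod_weight_mul_apply₂ (hw : ∀ i, ∑ a, w i a = 1) {j k : ι} (hjk : j ≠ k)
    (g : α → α → ℝ) :
    ∑ B : ι → α, (∏ i, w i (B i)) * g (B j) (B k) = ∑ a, w j a * ∑ b, w k b * g a b := by
  classical
  calc ∑ B : ι → α, (∏ i, w i (B i)) * g (B j) (B k)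
      = ∑ a, ∑ B : ι → α, (∏ i, w i (B i)) *
          ((if B j = a then 1 else 0) * g a (B k)) := by
        rw [Finset.sum_comm]
        refine Finset.sum_congr rfl fun B _ => ?_
        simp
    _ = ∑ a, w j a * ∑ b, w k b * g a b := by
        refine Finset.sum_congr rfl fun a _ => ?_
        rw [sum_prod_weight_mul_mul_apply hw hjk (fun c => if c = a then 1 else 0) (g a)]
        simp

lemma sum_prod_weight_mul_sum_apply (hw : ∀ i, ∑ a, w i a = 1) (t : ι → α → ℝ) :
    ∑ B : ι → α, (∏ i, w i (B i)) * ∑ j, t j (B j) = ∑ j, ∑ a, w j a * t j a := by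
  simp_rw [Finset.mul_sum]
  rw [Finset.sum_comm]
  exact Finset.sum_congr rfl fun j _ => sum_prod_weight_mul_apply hw j (t j)

variable {E : Type*} [NormedAddCommGroup E] [InnerProductSpace ℝ E]

lemma sum_prod_weight_mul_inner_apply_apply (hw : ∀ i, ∑ a, w i a = 1) {X : ι → α → E}
    (hX : ∀ j, ∑ a, w j a • X j a = 0) (j k : ι) :
    ∑ B : ι → α, (∏ i, w i (B i)) * ⟪X j (B j), X k (B k)⟫
      = if j = k then ∑ a, w j a * ‖X j a‖ ^ 2 else 0 := by
  split_ifs with hjk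
  · subst hjk
    simp_rw [real_inner_self_eq_norm_sq]
    exact sum_prod_weight_mul_apply hw j (fun a => ‖X j a‖ ^ 2)
  · rw [sum_prod_weight_mul_apply₂ hw hjk (fun a b => ⟪X j a, X k b⟫)]
    simp_rw [← real_inner_smul_right, ← inner_sum, ← real_inner_smul_left, ← sum_inner, hX,
      inner_zero_left]

lemma sum_prod_weight_mul_norm_sub_smul_sum_sq (hw : ∀ i, ∑ a, w i a = 1) {X : ι → α → E}
    (hX : ∀ j, ∑ a, w j a • X j a = 0) (y : E) (η : ℝ) :
    ∑ B : ι → α, (∏ i, w i (B i)) * ‖y - η • ∑ j, X j (B j)‖ ^ 2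
      = ‖y‖ ^ 2 + η ^ 2 * ∑ j, ∑ a, w j a * ‖X j a‖ ^ 2 := by
  have hexpand : ∀ B : ι → α, ‖y - η • ∑ j, X j (B j)‖ ^ 2
      = ‖y‖ ^ 2 - 2 * η * ∑ j, ⟪y, X j (B j)⟫
        + η ^ 2 * ∑ j, ∑ k, ⟪X j (B j), X k (B k)⟫ := by
    intro B
    rw [norm_sub_sq_real, norm_smul, mul_pow, Real.norm_eq_abs, sq_abs,
      ← real_inner_self_eq_norm_sq (∑ j, X j (B j)), real_inner_smul_right, inner_sum,
      sum_inner]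
    simp_rw [inner_sum]
    ring
  have hlin : ∑ B : ι → α, (∏ i, w i (B i)) * ∑ j, ⟪y, X j (B j)⟫ = 0 := by
    rw [sum_prod_weight_mul_sum_apply hw fun j a => ⟪y, X j a⟫]
    simp_rw [← real_inner_smul_right, ← inner_sum, hX]
    simp
  have hquad : ∑ B : ι → α, (∏ i, w i (B i)) * ∑ j, ∑ k, ⟪X j (B j), X k (B k)⟫
      = ∑ j, ∑ a, w j a * ‖X j a‖ ^ 2 := by
    simp_rw [Finset.mul_sum]
    rw [Finset.sum_comm]
    refine Finset.sum_congr rfl fun j _ => ?_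
    rw [Finset.sum_comm]
    simp_rw [sum_prod_weight_mul_inner_apply_apply hw hX j, Finset.sum_ite_eq, Finset.mem_univ,
      if_true]
  calc ∑ B : ι → α, (∏ i, w i (B i)) * ‖y - η • ∑ j, X j (B j)‖ ^ 2
      = ∑ B : ι → α, (‖y‖ ^ 2 * ∏ i, w i (B i)
          - 2 * η * ((∏ i, w i (B i)) * ∑ j, ⟪y, X j (B j)⟫)
          + η ^ 2 * ((∏ i, w i (B i)) * ∑ j, ∑ k, ⟪X j (B j), X k (B k)⟫)) := by
        refine Finset.sum_congr rfl fun B _ => ?_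
        rw [hexpand]
        ring
    _ = ‖y‖ ^ 2 + η ^ 2 * ∑ j, ∑ a, w j a * ‖X j a‖ ^ 2 := by
        rw [Finset.sum_add_distrib, Finset.sum_sub_distrib, ← Finset.mul_sum, ← Finset.mul_sum,
          ← Finset.mul_sum, sum_prod_weight hw, hlin, hquad]
        ring

end ProductWeights

section Minibatch

variable {d n m : ℕ}

noncomputable def mbRowWeight (J : Fin n → Fin m) (j : Fin m) (i : Fin n) : ℝ :=
  if J i = j then (m : ℝ) / n else 0

variable {J : Fin n → Fin m}

lemma mbWeight_eq_prod (B : Fin m → Fin n) : mbWeight J B = ∏ j, mbRowWeight J j (B j) := rfl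

lemma sum_mbRowWeight (hn : 0 < n) (hmn : m ∣ n)
    (hpart : ∀ j, (Finset.univ.filter (fun i => J i = j)).card = n / m) (j : Fin m) :
    ∑ i, mbRowWeight J j i = 1 := by
  simp only [mbRowWeight]
  rw [← Finset.sum_filter, Finset.sum_const, hpart j, nsmul_eq_mul]
  obtain ⟨k, rfl⟩ := hmn
  have hm : 0 < m := j.pos
  have hk : 0 < k := Nat.pos_of_mul_pos_left hn
  rw [Nat.mul_div_cancel_left k hm]
  push_cast
  field_simp

lemma sum_mbRowWeight_apply (i : Fin n) : ∑ j, mbRowWeight J j i = (m : ℝ) / n := by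
  simp [mbRowWeight]

lemma injective_of_mbWeight_ne_zero {B : Fin m → Fin n} (h : mbWeight J B ≠ 0) :
    Function.Injective B := by
  refine Function.LeftInverse.injective (g := J) fun j => ?_
  by_contra hj
  exact h (Finset.prod_eq_zero (Finset.mem_univ j) (if_neg hj))

namespace MbState

variable (gradf : Fin n → EuclideanSpace ℝ (Fin d) → EuclideanSpace ℝ (Fin d)) (η : ℝ)
  (S : MbState d n)

lemma step_x_sub_eq {w : Fin m → Fin n → ℝ} (hwi : ∀ i, ∑ j, w j i = (m : ℝ) / n)
    (xstar : EuclideanSpace ℝ (Fin d)) (B : Fin m → Fin n) :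
    (S.step gradf η B).x - xstar
      = (S.x - xstar - (η * m) • (((1 : ℝ) / n) • ∑ i, gradf i S.x))
        - η • ∑ j, ((gradf (B j) S.x - S.alpha (B j))
          - ∑ i, w j i • (gradf i S.x - S.alpha i)) := by
  have hmean : ∑ j, ∑ i, w j i • (gradf i S.x - S.alpha i)
      = ((m : ℝ) / n) • ∑ i, (gradf i S.x - S.alpha i) := by
    rw [Finset.sum_comm]
    simp_rw [← Finset.sum_smul, hwi, Finset.smul_sum]
  simp only [step, abar, Finset.sum_sub_distrib, hmean]
  module

lemma sum_norm_step_alpha_sub_sq {B : Fin m → Fin n} (hB : Function.Injective B)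
    (c : Fin n → EuclideanSpace ℝ (Fin d)) :
    ∑ i, ‖(S.step gradf η B).alpha i - c i‖ ^ 2
      = ∑ i, ‖S.alpha i - c i‖ ^ 2
        + ∑ j, (‖gradf (B j) S.x - c (B j)‖ ^ 2 - ‖S.alpha (B j) - c (B j)‖ ^ 2) := by
  have hterm : ∀ i, ‖(S.step gradf η B).alpha i - c i‖ ^ 2 = ‖S.alpha i - c i‖ ^ 2
      + if i ∈ Finset.univ.image B then ‖gradf i S.x - c i‖ ^ 2 - ‖S.alpha i - c i‖ ^ 2
        else 0 := by
    intro i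
    by_cases h : ∃ j, B j = i <;> simp [step, h]
  rw [Finset.sum_congr rfl fun i _ => hterm i, Finset.sum_add_distrib, Finset.sum_ite_mem,
    Finset.univ_inter, Finset.sum_image fun _ _ _ _ h => hB h]


lemma sum_mbWeight_mul_norm_step_x_sub_sq_le (hw : ∀ j, ∑ i, mbRowWeight J j i = 1)
    (xstar : EuclideanSpace ℝ (Fin d)) :
    ∑ B : Fin m → Fin n, mbWeight J B * ‖(S.step gradf η B).x - xstar‖ ^ 2
      ≤ ‖S.x - xstar - (η * m) • (((1 : ℝ) / n) • ∑ i, gradf i S.x)‖ ^ 2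
        + η ^ 2 * ((m : ℝ) / n * ∑ i, ‖gradf i S.x - S.alpha i‖ ^ 2) := by
  set u := fun i => gradf i S.x - S.alpha i
  have hX : ∀ j, ∑ i, mbRowWeight J j i • (u i - ∑ k, mbRowWeight J j k • u k) = 0 := by
    simp [smul_sub, Finset.sum_sub_distrib, ← Finset.sum_smul, hw]
  have hvar : ∑ j, ∑ i, mbRowWeight J j i * ‖u i - ∑ k, mbRowWeight J j k • u k‖ ^ 2
      ≤ (m : ℝ) / n * ∑ i, ‖u i‖ ^ 2 := by
    calc ∑ j, ∑ i, mbRowWeight J j i * ‖u i - ∑ k, mbRowWeight J j k • u k‖ ^ 2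
        ≤ ∑ j, ∑ i, mbRowWeight J j i * ‖u i‖ ^ 2 := by
          refine Finset.sum_le_sum fun j _ => ?_
          rw [sum_mul_norm_sub_sum_smul_sq (hw j)]
          exact sub_le_self _ (sq_nonneg _)
      _ = (m : ℝ) / n * ∑ i, ‖u i‖ ^ 2 := by
          rw [Finset.sum_comm, Finset.mul_sum]
          simp_rw [← Finset.sum_mul, sum_mbRowWeight_apply]
  calc ∑ B : Fin m → Fin n, mbWeight J B * ‖(S.step gradf η B).x - xstar‖ ^ 2
      = ∑ B : Fin m → Fin n, (∏ j, mbRowWeight J j (B j)) *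
          ‖(S.x - xstar - (η * m) • (((1 : ℝ) / n) • ∑ i, gradf i S.x))
            - η • ∑ j, (u (B j) - ∑ i, mbRowWeight J j i • u i)‖ ^ 2 := by
        refine Finset.sum_congr rfl fun B _ => ?_
        rw [mbWeight_eq_prod, step_x_sub_eq gradf η S (sum_mbRowWeight_apply (J := J))]
    _ ≤ _ := by
        rw [sum_prod_weight_mul_norm_sub_smul_sum_sq hw hX]
        gcongr

lemma sum_mbWeight_mul_sum_norm_step_alpha_sub_sq (hw : ∀ j, ∑ i, mbRowWeight J j i = 1)
    (c : Fin n → EuclideanSpace ℝ (Fin d)) :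
    ∑ B : Fin m → Fin n, mbWeight J B * ∑ i, ‖(S.step gradf η B).alpha i - c i‖ ^ 2
      = ∑ i, ‖S.alpha i - c i‖ ^ 2 + (m : ℝ) / n
          * (∑ i, ‖gradf i S.x - c i‖ ^ 2 - ∑ i, ‖S.alpha i - c i‖ ^ 2) := by
  set t := fun i => ‖gradf i S.x - c i‖ ^ 2 - ‖S.alpha i - c i‖ ^ 2
  calc ∑ B : Fin m → Fin n, mbWeight J B * ∑ i, ‖(S.step gradf η B).alpha i - c i‖ ^ 2
      = ∑ B : Fin m → Fin n, (∏ j, mbRowWeight J j (B j))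
          * (∑ i, ‖S.alpha i - c i‖ ^ 2 + ∑ j, t (B j)) := by
        refine Finset.sum_congr rfl fun B _ => ?_
        by_cases hB : mbWeight J B = 0
        · rw [hB, ← mbWeight_eq_prod, hB, zero_mul, zero_mul]
        · rw [sum_norm_step_alpha_sub_sq gradf η S (injective_of_mbWeight_ne_zero hB),
            mbWeight_eq_prod]
    _ = _ := by
        rw [Finset.sum_congr rfl fun B _ => mul_add _ _ _, Finset.sum_add_distrib,
          ← Finset.sum_mul, sum_prod_weight hw, one_mul,
          sum_prod_weight_mul_sum_apply hw fun _ i => t i, Finset.sum_comm,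
          ← Finset.sum_sub_distrib, Finset.mul_sum]
        simp_rw [← Finset.sum_mul, sum_mbRowWeight_apply, t]

end MbState

end Minibatch

/-- Read with `y = x - x*`, `h = ∇f(x)`, `D = f(x) - f(x*)`, `A = Σ ‖α_i - ∇f_i(x*)‖²`,
`Gq = Σ ‖∇f_i(x) - ∇f_i(x*)‖²` and `U = Σ ‖∇f_i(x) - α_i‖²`. -/
lemma potential_le_of_gradient_estimates {E : Type*} [NormedAddCommGroup E]
    [InnerProductSpace ℝ E] {y h : E} {m n L Lf μ η A Gq U D : ℝ}
    (hm : 0 < m) (hn : 0 < n) (hL : 0 < L) (hLf : 0 < Lf) (hμ : 0 < μ)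
    (hη : η = 1 / (2 * m * Lf + 6 * L))
    (hU : U ≤ 2 * Gq + 2 * A) (hGq : Gq ≤ 2 * L * (n * D)) (hA : 0 ≤ A)
    (hh : ‖h‖ ^ 2 ≤ 2 * Lf * D) (hstrong : D + μ / 2 * ‖y‖ ^ 2 ≤ ⟪h, y⟫) :
    ‖y - (η * m) • h‖ ^ 2 + η ^ 2 * (m / n * U) + 4 * η ^ 2 * (A + m / n * (Gq - A))
      ≤ (1 - min (μ * m / (4 * m * Lf + 12 * L)) (m / (3 * n))) * (‖y‖ ^ 2 + 4 * η ^ 2 * A) := by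
  set γ := min (μ * m / (4 * m * Lf + 12 * L)) (m / (3 * n))
  have hη0 : 0 < η := by rw [hη]; positivity
  have hη1 : η * (2 * m * Lf + 6 * L) = 1 := by rw [hη]; field_simp
  have hγμ : γ ≤ η * μ * m / 2 := by
    refine (min_le_left _ _).trans_eq ?_
    rw [hη]
    field_simp
    ring
  have hγp : γ ≤ m / n / 2 := by
    refine (min_le_right _ _).trans ?_
    rw [div_div, div_le_div_iff_of_pos_left hm (by positivity) (by positivity)]
    linarith
  have hp : m / n * n = m := div_mul_cancel₀ m hn.ne'
  have hD : 0 ≤ D := by nlinarith [sq_nonneg ‖h‖]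
  rw [norm_sub_sq_real, norm_smul, mul_pow, real_inner_smul_right, Real.norm_eq_abs, sq_abs,
    real_inner_comm]
  have hU' := mul_le_mul_of_nonneg_left hU (by positivity : 0 ≤ η ^ 2 * (m / n))
  have hGq' : 6 * η ^ 2 * (m / n) * Gq ≤ 12 * η ^ 2 * L * m * D :=
    calc 6 * η ^ 2 * (m / n) * Gq ≤ 6 * η ^ 2 * (m / n) * (2 * L * (n * D)) := by gcongr
      _ = 12 * η ^ 2 * L * (m / n * n) * D := by ring
      _ = 12 * η ^ 2 * L * m * D := by rw [hp]
  have hh' := mul_le_mul_of_nonneg_left hh (by positivity : 0 ≤ (η * m) ^ 2)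
  have hstrong' := mul_le_mul_of_nonneg_left hstrong (by positivity : 0 ≤ 2 * η * m)
  have hDcoef : 0 ≤ (2 * η * m - 2 * η ^ 2 * m ^ 2 * Lf - 12 * η ^ 2 * L * m) * D := by
    have : 2 * η * m - 2 * η ^ 2 * m ^ 2 * Lf - 12 * η ^ 2 * L * m = 2 * η ^ 2 * m ^ 2 * Lf := by
      linear_combination -2 * η * m * hη1
    rw [this]
    positivity
  have hY := mul_le_mul_of_nonneg_right hγμ (sq_nonneg ‖y‖)
  have hY0 : 0 ≤ η * μ * m * ‖y‖ ^ 2 := by positivity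
  have hA' := mul_le_mul_of_nonneg_right hγp (by positivity : 0 ≤ 4 * η ^ 2 * A)
  linarith

theorem minibatch_potential_contraction_general
    {d n m : ℕ} (hn : 0 < n) (hm : 0 < m) (hmn : m ∣ n)
    (L Lf μ : ℝ) (hL : 0 < L) (hLf : 0 < Lf) (hμ : 0 < μ)
    (f : Fin n → EuclideanSpace ℝ (Fin d) → ℝ)
    (gradf : Fin n → EuclideanSpace ℝ (Fin d) → EuclideanSpace ℝ (Fin d))
    (hgrad : ∀ i x, HasGradientAt (f i) (gradf i x) x)
    (hconv : ∀ i, ConvexOn ℝ Set.univ (f i))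
    (hsmooth : ∀ i (x y : EuclideanSpace ℝ (Fin d)), ‖gradf i x - gradf i y‖ ≤ L * ‖x - y‖)
    (hFsmooth : ∀ x y : EuclideanSpace ℝ (Fin d),
      ‖((1 : ℝ) / n) • (∑ i, gradf i x) - ((1 : ℝ) / n) • (∑ i, gradf i y)‖ ≤ Lf * ‖x - y‖)
    (hFstrong : ∀ x y : EuclideanSpace ℝ (Fin d),
      μ * ‖x - y‖ ^ 2 ≤
        ⟪((1 : ℝ) / n) • (∑ i, gradf i x) - ((1 : ℝ) / n) • (∑ i, gradf i y), x - y⟫)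
    (xstar : EuclideanSpace ℝ (Fin d))
    (hstarzero : (∑ i, gradf i xstar) = 0)
    (J : Fin n → Fin m)
    (hpart : ∀ j, (Finset.univ.filter (fun i => J i = j)).card = n / m)
    (η : ℝ)
    (S : MbState d n)
    (hηdef : η = 1 / (2 * (m : ℝ) * Lf + 6 * L))
    :
    (∑ B : Fin m → Fin n, mbWeight J B *
        (‖(MbState.step gradf η S B).x - xstar‖ ^ 2
          + 4 * η ^ 2 * ∑ i, ‖(MbState.step gradf η S B).alpha i - gradf i xstar‖ ^ 2))
      ≤ (1 - min (μ * (m : ℝ) / (4 * (m : ℝ) * Lf + 12 * L)) ((m : ℝ) / (3 * n))) *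
          (‖S.x - xstar‖ ^ 2 + 4 * η ^ 2 * ∑ i, ‖S.alpha i - gradf i xstar‖ ^ 2) := by
  have hw := sum_mbRowWeight hn hmn hpart
  have hF : ∀ z, HasGradientAt (fun z => (1 / n : ℝ) * ∑ i, f i z)
      ((1 / n : ℝ) • ∑ i, gradf i z) z :=
    fun z => (HasGradientAt.fun_sum fun i _ => hgrad i z).const_mul _
  have hFconv : ConvexOn ℝ Set.univ (fun z => (1 / n : ℝ) * ∑ i, f i z) :=
    (ConvexOn.fun_sum convex_univ fun i _ => hconv i).smul (by positivity)
  have hFgrad := hFconv.norm_sub_gradient_sq_le hF hLf hFsmooth S.x xstar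
  simp only [hstarzero, smul_zero, sub_zero, inner_zero_left] at hFgrad
  have hgap := sum_norm_gradient_sub_sq_le hconv hgrad hL hsmooth hstarzero S.x
  rw [show ∑ i, f i S.x - ∑ i, f i xstar
      = n * ((1 / n : ℝ) * ∑ i, f i S.x - (1 / n : ℝ) * ∑ i, f i xstar) by field_simp] at hgap
  calc _ = ∑ B : Fin m → Fin n, mbWeight J B * ‖(S.step gradf η B).x - xstar‖ ^ 2
        + 4 * η ^ 2 * ∑ B : Fin m → Fin n,
          mbWeight J B * ∑ i, ‖(S.step gradf η B).alpha i - gradf i xstar‖ ^ 2 := by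
        rw [Finset.mul_sum, ← Finset.sum_add_distrib]
        exact Finset.sum_congr rfl fun B _ => by ring
    _ ≤ _ := by
        rw [MbState.sum_mbWeight_mul_sum_norm_step_alpha_sub_sq gradf η S hw]
        refine le_trans ?_ (potential_le_of_gradient_estimates (by exact_mod_cast hm)
          (by exact_mod_cast hn) hL hLf hμ hηdef (sum_norm_sub_sq_le _ _ fun i => gradf i xstar)
          hgap (Finset.sum_nonneg fun i _ => sq_nonneg _) hFgrad
          (sub_add_sq_le_inner_of_strongly_monotone_gradient hF hFstrong S.x xstar))
        gcongr
        exact MbState.sum_mbWeight_mul_norm_step_x_sub_sq_le gradf η S hw xstar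

theorem minibatch_potential_contraction
    {d n m : ℕ} (hd : 0 < d) (hn : 0 < n) (hm : 0 < m) (hmn : m ∣ n)
    (L Lf μ : ℝ) (hL : 0 < L) (hLf : 0 < Lf) (hμ : 0 < μ)
    (f : Fin n → EuclideanSpace ℝ (Fin d) → ℝ)
    (gradf : Fin n → EuclideanSpace ℝ (Fin d) → EuclideanSpace ℝ (Fin d))
    (hgrad : ∀ i x, HasGradientAt (f i) (gradf i x) x)
    (hconv : ∀ i, ConvexOn ℝ Set.univ (f i))
    (hsmooth : ∀ i (x y : EuclideanSpace ℝ (Fin d)), ‖gradf i x - gradf i y‖ ≤ L * ‖x - y‖)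
    (hFsmooth : ∀ x y : EuclideanSpace ℝ (Fin d),
      ‖((1 : ℝ) / n) • (∑ i, gradf i x) - ((1 : ℝ) / n) • (∑ i, gradf i y)‖ ≤ Lf * ‖x - y‖)
    (hFstrong : ∀ x y : EuclideanSpace ℝ (Fin d),
      μ * ‖x - y‖ ^ 2 ≤
        ⟪((1 : ℝ) / n) • (∑ i, gradf i x) - ((1 : ℝ) / n) • (∑ i, gradf i y), x - y⟫)
    (xstar : EuclideanSpace ℝ (Fin d))
    (hmin : ∀ x : EuclideanSpace ℝ (Fin d),
      (((1 : ℝ) / n) * ∑ i, f i xstar) ≤ ((1 : ℝ) / n) * ∑ i, f i x)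
    (hstarzero : (∑ i, gradf i xstar) = 0)
    (J : Fin n → Fin m)
    (hpart : ∀ j, (Finset.univ.filter (fun i => J i = j)).card = n / m)
    (η : ℝ) (hη : 0 < η)
    (S : MbState d n)
    (hηdef : η = 1 / (2 * (m : ℝ) * Lf + 6 * L))
    :
    (∑ B : Fin m → Fin n, mbWeight J B *
        (‖(MbState.step gradf η S B).x - xstar‖ ^ 2
          + 4 * η ^ 2 * ∑ i, ‖(MbState.step gradf η S B).alpha i - gradf i xstar‖ ^ 2))
      ≤ (1 - min (μ * (m : ℝ) / (4 * (m : ℝ) * Lf + 12 * L)) ((m : ℝ) / (3 * n))) *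
          (‖S.x - xstar‖ ^ 2 + 4 * η ^ 2 * ∑ i, ‖S.alpha i - gradf i xstar‖ ^ 2) :=
  minibatch_potential_contraction_general hn hm hmn L Lf μ hL hLf hμ f gradf hgrad hconv hsmooth
    hFsmooth hFstrong xstar hstarzero J hpart η S hηdef
end
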